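/- arXiv:1705.00478 — 2 statements merged into one kernel-verified Lean document; each statement's English description precedes it below -/
import Mathlib

section
/- Let (aY, H) satisfy Axioms (h1)–(h5). For every event e = (z,u) ∈ aY, the reflection ρ_e : S¹ → S¹ with respect to e, defined by ρ_e(z)=z, ρ_e(u)=u, and (x, ρ_e(x)) = x_e for every x ∈ S¹∖e, is an involutive homeomorphism of S¹. -/
/-! Write `e = (z, u)`. By (h2) each chord `(x, ρ x)` of `h_e` separates `z` from `u`, by (h3)
two such chords never cross, and by (h4) `ρ (ρ x) = x`. Read in the angular chart of the circle
cut at `u`, `ρ` therefore becomes an involution of `(-π, π)` fixing the angle of `z` and exchanging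
its two sides, and the non-crossing of chords makes it strictly decreasing; a strictly monotone
bijection of an open interval is continuous. The chart cut at `z` gives continuity at `u`. -/

open Set
open scoped ENNReal

noncomputable section

namespace Paper

/-- The pairs `(x,y)` and `(z,u)` of points of the circle separate each other:
`z` and `u` lie in different connected components of the complement of `{x,y}`. -/
def SeparatesPts (x y z u : Circle) : Prop :=
  z ∈ ({x, y}ᶜ : Set Circle) ∧ u ∈ ({x, y}ᶜ : Set Circle) ∧
    u ∉ connectedComponentIn ({x, y}ᶜ : Set Circle) z

/-- An event: an unordered pair of distinct points of the circle. -/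
abbrev Event : Type := {e : Sym2 Circle // ¬ e.IsDiag}

/-- The underlying two-point subset of the circle of an event. -/
def EventPts (e : Event) : Set Circle := {x | x ∈ e.1}

/-- Two events separate each other as pairs of points on the circle. -/
def EventSep (a b : Event) : Prop :=
  ∃ x y z u : Circle, a.1 = s(x, y) ∧ b.1 = s(z, u) ∧ SeparatesPts x y z u

/-- Two events are in the causal relation iff they do not separate each other. -/
def Causal (a b : Event) : Prop := ¬ EventSep a b

/-- Two events lie on a common light line iff they share a point. -/
def OnLight (a b : Event) : Prop := ∃ x : Circle, x ∈ a.1 ∧ x ∈ b.1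

/-- Strong causal relation: causal and not on a common light line. -/
def StrongCausal (a b : Event) : Prop := Causal a b ∧ ¬ OnLight a b

/-- `U` is one of the two open arcs determined by the event `e`. -/
def IsOpenArc (e : Event) (U : Set Circle) : Prop :=
  ∃ z, z ∉ EventPts e ∧ U = connectedComponentIn (EventPts e)ᶜ z

/-- `a ≤ b ≤ c`: the events `a` and `c` lie in the two (closed) arcs determined
by `b` on different sides of `b`. -/
def Between (a b c : Event) : Prop :=
  ∃ U V : Set Circle, IsOpenArc b U ∧ IsOpenArc b V ∧ U ≠ V ∧
    EventPts a ⊆ closure U ∧ EventPts c ⊆ closure V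

/-- `a < b < c`. -/
def SBtw (a b c : Event) : Prop := Between a b c ∧ a ≠ b ∧ c ≠ b

/-- The event `d` is strictly between the events `a` and `c`: `a` and `c` lie in
different open arcs determined by `d`. -/
def StrictlyBetween (d a c : Event) : Prop :=
  ∃ U V : Set Circle, IsOpenArc d U ∧ IsOpenArc d V ∧ U ≠ V ∧
    EventPts a ⊆ U ∧ EventPts c ⊆ V

/-- `ω` is an infinitely remote point of the semi-metric `d`. -/
def IsRemote (d : Circle → Circle → ℝ≥0∞) (ω : Circle) : Prop :=
  ∀ x, x ≠ ω → d x ω = ⊤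

/-- A semi-metric: symmetric, vanishing exactly on the diagonal, with at most one
infinitely remote point. -/
structure IsSemiMetric (d : Circle → Circle → ℝ≥0∞) : Prop where
  symm : ∀ x y, d x y = d y x
  eq_zero_iff : ∀ x y, d x y = 0 ↔ x = y
  top_remote : ∀ x y, d x y = ⊤ → ∃ ω, IsRemote d ω ∧ (x = ω ∨ y = ω)
  remote_unique : ∀ ω ω', IsRemote d ω → IsRemote d ω' → ω = ω'

/-- The semi-metric `d` has no infinitely remote point in the set `s`. -/
def AvoidsRemote (d : Circle → Circle → ℝ≥0∞) (s : Set Circle) : Prop :=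
  ∀ ω ∈ s, ¬ IsRemote d ω

/-- Real-valued distance. -/
def dR (d : Circle → Circle → ℝ≥0∞) (x y : Circle) : ℝ := (d x y).toReal

/-- A Möbius structure on the circle: a class of pairwise Möbius equivalent
semi-metrics (same cross-ratios on nondegenerate 4-tuples), containing for each
point a semi-metric with that point infinitely remote (metric inversion). -/
structure MoebiusStructure : Type where
  sems : Set (Circle → Circle → ℝ≥0∞)
  nonempty : sems.Nonempty
  isSemiMetric : ∀ d ∈ sems, IsSemiMetric d
  exists_remote : ∀ ω : Circle, ∃ d ∈ sems, IsRemote d ω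
  compatible : ∀ d ∈ sems, ∀ d' ∈ sems, ∀ x y z u : Circle,
    x ≠ y → x ≠ z → x ≠ u → y ≠ z → y ≠ u → z ≠ u →
    AvoidsRemote d {x, y, z, u} → AvoidsRemote d' {x, y, z, u} →
    dR d x z * dR d y u * (dR d' x u * dR d' y z)
      = dR d' x z * dR d' y u * (dR d x u * dR d y z)

/-- The open balls, centered at finite points, of the semi-metrics of `D`
having infinitely remote points. -/
def mBalls (D : Set (Circle → Circle → ℝ≥0∞)) : Set (Set Circle) :=
  {B | ∃ d ∈ D, ∃ ω : Circle, IsRemote d ω ∧ ∃ x : Circle, x ≠ ω ∧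
        ∃ r : ℝ≥0∞, 0 < r ∧ B = {y | d x y < r}}

/-- Axiom (T): the `M`-topology on the circle is the standard one. -/
def AxiomT (M : MoebiusStructure) : Prop :=
  TopologicalSpace.generateFrom (mBalls M.sems)
    = (inferInstance : TopologicalSpace Circle)

/-- Axiom (M): monotonicity. -/
def AxiomM (M : MoebiusStructure) : Prop :=
  ∀ x y z u : Circle, SeparatesPts x y z u →
    ∀ d ∈ M.sems, AvoidsRemote d {x, y, z, u} →
      max (dR d x z * dR d y u) (dR d x u * dR d y z) < dR d x y * dR d z u

/-- A monotone Möbius structure on the circle. -/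
def IsMonotone (M : MoebiusStructure) : Prop := AxiomT M ∧ AxiomM M

/-- The pair of events `a = (x,y)`, `b = (z,u)` is `M`-harmonic:
`|xz|·|yu| = |xu|·|yz|`. -/
def MHarmonic (M : MoebiusStructure) (a b : Event) : Prop :=
  ∃ x y z u : Circle, a.1 = s(x, y) ∧ b.1 = s(z, u) ∧
    ∀ d ∈ M.sems, AvoidsRemote d {x, y, z, u} →
      dR d x z * dR d y u = dR d x u * dR d y z

/-- The timelike line dual to the event `e`, for the Möbius structure `M`. -/
def hline (M : MoebiusStructure) (e : Event) : Set Event := {a | MHarmonic M a e}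

/-- Axiom (h1). -/
def AxH1 (H : Set (Set Event)) (line : Event → Set Event) : Prop :=
  (∀ e, line e ∈ H) ∧ ∀ h ∈ H, ∃ e, h = line e

/-- Axiom (h2): any event on `h_e` separates `e`. -/
def AxH2 (line : Event → Set Event) : Prop := ∀ e a, a ∈ line e → EventSep a e

/-- Axiom (h3): any two events on a timelike line are in the causal relation. -/
def AxH3 (line : Event → Set Event) : Prop :=
  ∀ e a b, a ∈ line e → b ∈ line e → Causal a b

/-- Axiom (h4): for any `x ∉ e` there is a unique event `x_e ∈ h_e` containing `x`. -/
def AxH4 (line : Event → Set Event) : Prop :=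
  ∀ e : Event, ∀ x : Circle, x ∉ EventPts e → ∃! a : Event, a ∈ line e ∧ x ∈ a.1

/-- Axiom (h5): duality. -/
def AxH5 (line : Event → Set Event) : Prop := ∀ e a, a ∈ line e → e ∈ line a

/-- Axiom (h6): two distinct events lie on at most one common timelike line. -/
def AxH6 (line : Event → Set Event) : Prop :=
  ∀ a b : Event, a ≠ b → ∀ e e',
    a ∈ line e → b ∈ line e → a ∈ line e' → b ∈ line e' → e = e'

/-- The projection `x_e`: the unique event of the timelike line `h_e` containing `x`
(junk value if there is none). -/
noncomputable def proj (line : Event → Set Event) (e : Event) (x : Circle) : Event :=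
  letI := Classical.propDecidable (∃ a, a ∈ line e ∧ x ∈ a.1)
  if h : ∃ a, a ∈ line e ∧ x ∈ a.1 then h.choose else e

/-- Axiom (t1). -/
def AxT1 (t : Event → Event → ℝ) : Prop := ∀ a b, Causal a b → 0 ≤ t a b

/-- Axiom (t2). -/
def AxT2 (t : Event → Event → ℝ) : Prop :=
  ∀ a b, Causal a b → (t a b = 0 ↔ OnLight a b)

/-- Axiom (t3). -/
def AxT3 (t : Event → Event → ℝ) : Prop := ∀ a b, Causal a b → t a b = t b a

/-- Axiom (t4a): timelike lines are `t`-geodesics. -/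
def AxT4a (line : Event → Set Event) (t : Event → Event → ℝ) : Prop :=
  ∀ a, ∀ e e' e'', e ∈ line a → e' ∈ line a → e'' ∈ line a →
    Between e e' e'' → t e e' + t e' e'' = t e e''

/-- Axiom (t4b): events at any prescribed time on both sides. -/
def AxT4b (line : Event → Set Event) (t : Event → Event → ℝ) : Prop :=
  ∀ a, ∀ e ∈ line a, ∀ s : ℝ, 0 < s →
    ∃ ep em, ep ∈ line a ∧ em ∈ line a ∧ SBtw em e ep ∧ t e ep = s ∧ t e em = s

/-- Axiom (t5). -/
def AxT5 (line : Event → Set Event) (t : Event → Event → ℝ) : Prop :=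
  ∀ e d : Event, ∀ x y z u : Circle,
    e.1 = s(x, y) → d.1 = s(z, u) → StrongCausal e d →
    t (proj line e z) (proj line e u) = t (proj line d x) (proj line d y)

/-- Axiom (t6): harmonicity. -/
def AxT6 (line : Event → Set Event) (t : Event → Event → ℝ) : Prop :=
  ∀ e d : Event, ∀ x y z u : Circle,
    e.1 = s(x, y) → d.1 = s(z, u) → d ∈ line e →
    ∀ a b : Event, a.1 = s(x, z) → b.1 = s(x, u) →
      t (proj line a y) (proj line a u) = t (proj line b y) (proj line b z)

/-- The time determined by a Möbius structure: `0` on light lines, and the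
cross-ratio formula for events in the strong causal relation via a
common perpendicular. -/
def TimeSpec (M : MoebiusStructure) (t : Event → Event → ℝ) : Prop :=
  (∀ a b, OnLight a b → t a b = 0) ∧
  (∀ a b e : Event, a ∈ hline M e → b ∈ hline M e → a ≠ b →
    ∀ x y z z' : Circle, e.1 = s(x, y) → z ∈ a.1 → z' ∈ b.1 →
      ∀ d ∈ M.sems, AvoidsRemote d {x, y, z, z'} →
        t a b = |Real.log (dR d x z' * dR d y z / (dR d x z * dR d y z'))|)

/-- The function `F_{ab}` of the hierarchy of time conditions, on events `d`
strictly between `(o,ω)` and `(o',ω')`, for `a = (o,o')`, `b = (ω,ω')`. -/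
noncomputable def Fab (line : Event → Set Event) (t : Event → Event → ℝ)
    (o ω o' ω' : Circle) (d : Event) : ℝ :=
  (t (proj line d o) (proj line d ω) + t (proj line d o') (proj line d ω')) / 2

end Paper

namespace Paper

/-- The defining property of the reflection `ρ_e` with respect to the event `e`. -/
def RefSpec (line : Event → Set Event) (e : Event) (ρ : Circle → Circle) : Prop :=
  (∀ p ∈ EventPts e, ρ p = p) ∧
    ∀ x, x ∉ EventPts e → ρ x ≠ x ∧ ∃ a ∈ line e, x ∈ a.1 ∧ ρ x ∈ a.1

/-- The label of a fixed-point-free involution of `Fin 4`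
(the partner of `0`, shifted down by one). -/
def label (σ : Equiv.Perm (Fin 4)) : Fin 3 :=
  if σ 0 = 1 then 0 else if σ 0 = 2 then 1 else 2

/-- The three fixed-point-free involutions of `Fin 4`, i.e. the three partitions of a
4-element set into pairs of opposite edges. -/
def inv3 : Fin 3 → Equiv.Perm (Fin 4) :=
  ![Equiv.swap 0 1 * Equiv.swap 2 3, Equiv.swap 0 2 * Equiv.swap 1 3,
    Equiv.swap 0 3 * Equiv.swap 1 2]

/-- The cross-ratio homomorphism `φ : S₄ → S₃`, acting on the labels of the
partitions into pairs of opposite edges by conjugation. -/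
def permAct (π : Equiv.Perm (Fin 4)) (j : Fin 3) : Fin 3 := label (π * inv3 j * π⁻¹)

/-- A sub-Möbius structure on the circle: a map `regP₄ → L₄` equivariant with respect
to the signed cross-ratio homomorphism. -/
def SubMoebius (M : (Fin 4 → Circle) → Fin 3 → ℝ) : Prop :=
  (∀ q : Fin 4 → Circle, Function.Injective q → M q 0 + M q 1 + M q 2 = 0) ∧
  ∀ q : Fin 4 → Circle, Function.Injective q → ∀ π : Equiv.Perm (Fin 4), ∀ j : Fin 3,
    M (q ∘ π) j = ((Equiv.Perm.sign π : ℤ) : ℝ) * M q (permAct π j)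

/-- The base values of the sub-Möbius structure associated with a timed causal space:
for a 4-tuple `q = (x,y,z,u)` whose cyclic order is `xyuz` (i.e. the pairs `(x,u)` and
`(y,z)` separate each other), `M(q) = (−t_{xy}, t_{yu}, t_{xy} − t_{yu})`, where
`t_{xy}` is the time between the projections of `u`, `z` to the timelike line dual to
the event `(x,y)`, and `t_{yu}` the time between the projections of `z`, `x` to the
timelike line dual to the event `(y,u)`. -/
def BaseSpec (line : Event → Set Event) (t : Event → Event → ℝ)
    (M : (Fin 4 → Circle) → Fin 3 → ℝ) : Prop :=
  ∀ q : Fin 4 → Circle, Function.Injective q →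
    SeparatesPts (q 0) (q 3) (q 1) (q 2) →
    ∀ exy eyu : Event, exy.1 = s(q 0, q 1) → eyu.1 = s(q 1, q 3) →
      M q 0 = -(t (proj line exy (q 3)) (proj line exy (q 2))) ∧
      M q 1 = t (proj line eyu (q 2)) (proj line eyu (q 0)) ∧
      M q 2 = t (proj line exy (q 3)) (proj line exy (q 2))
                - t (proj line eyu (q 2)) (proj line eyu (q 0))

/-- The three cross-ratios `(ln cr₁, ln cr₂, ln cr₃)` of a 4-tuple with respect to a
semi-metric. -/
noncomputable def crMap (dm : Circle → Circle → ℝ≥0∞) (q : Fin 4 → Circle) :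
    Fin 3 → ℝ :=
  ![Real.log (dR dm (q 0) (q 2) * dR dm (q 1) (q 3)
      / (dR dm (q 0) (q 3) * dR dm (q 1) (q 2))),
    Real.log (dR dm (q 0) (q 3) * dR dm (q 1) (q 2)
      / (dR dm (q 0) (q 1) * dR dm (q 2) (q 3))),
    Real.log (dR dm (q 0) (q 1) * dR dm (q 2) (q 3)
      / (dR dm (q 1) (q 3) * dR dm (q 0) (q 2)))]

/-- The semi-metrics whose cross-ratio map is the given map `M`. -/
def mapSems (M : (Fin 4 → Circle) → Fin 3 → ℝ) : Set (Circle → Circle → ℝ≥0∞) :=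
  {dm | IsSemiMetric dm ∧ ∀ q : Fin 4 → Circle, Function.Injective q →
    AvoidsRemote dm (Set.range q) → ∀ j, M q j = crMap dm q j}

/-- Harmonicity of a pair of events with respect to a map-form Möbius structure `M`:
`ln cr₃(u,x,y,z) = 0`. -/
def MapHarmonic (M : (Fin 4 → Circle) → Fin 3 → ℝ) (a b : Event) : Prop :=
  ∃ x y z u : Circle, a.1 = s(x, y) ∧ b.1 = s(z, u) ∧
    Function.Injective ![u, x, y, z] ∧ M ![u, x, y, z] 2 = 0

/-- The 4-tuple `(x₁,x₂,x₃,x₄)` is harmonic with respect to the Möbius structure `M`: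
`|x₁x₃|·|x₂x₄| = |x₁x₄|·|x₂x₃|`. -/
def Harm4 (M : MoebiusStructure) (x₁ x₂ x₃ x₄ : Circle) : Prop :=
  ∀ d ∈ M.sems, AvoidsRemote d {x₁, x₂, x₃, x₄} →
    dR d x₁ x₃ * dR d x₂ x₄ = dR d x₁ x₄ * dR d x₂ x₃

/-- The cross-ratio `cr₁`. -/
noncomputable def cr1R (d : Circle → Circle → ℝ≥0∞) (a b c e : Circle) : ℝ :=
  dR d a c * dR d b e / (dR d a e * dR d b c)

/-- A tuple of points of the circle is in cyclic order. -/
def InCyclicOrder {n : ℕ} (q : Fin n → Circle) : Prop :=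
  ∀ i j k l : Fin n, i < j → j < k → k < l → SeparatesPts (q i) (q k) (q j) (q l)

/-- Increment Axiom (I). -/
def AxiomI (M : MoebiusStructure) : Prop :=
  ∀ q : Fin 7 → Circle, Function.Injective q → InCyclicOrder q →
    Harm4 M (q 0) (q 2) (q 4) (q 5) → Harm4 M (q 1) (q 2) (q 3) (q 5) →
    ∀ d ∈ M.sems, AvoidsRemote d (Set.range q) →
      cr1R d (q 3) (q 4) (q 5) (q 6) < cr1R d (q 0) (q 1) (q 5) (q 6)

/-- The Lambert quadrilateral inequality (LQI). -/
def LQI (line : Event → Set Event) (t : Event → Event → ℝ) : Prop :=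
  ∀ a b : Event, ∀ o o' ω ω' : Circle,
    a.1 = s(o, o') → b.1 = s(ω, ω') → StrongCausal a b → SeparatesPts o ω' o' ω →
    ∀ eA eB : Event, eA.1 = s(o, ω) → eB.1 = s(o', ω') →
    ∀ d₀ : Event, a ∈ line d₀ → b ∈ line d₀ →
    ∀ d : Event, StrictlyBetween d eA eB → d ≠ d₀ → a ∈ line d →
      Fab line t o ω o' ω' d₀ < Fab line t o ω o' ω' d

/-- `g` is an `M`-automorphism: a bijection of the circle preserving the cross-ratios
of the Möbius structure `M`. -/
def MAut (M : MoebiusStructure) (g : Circle ≃ Circle) : Prop :=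
  ∀ d ∈ M.sems, ∀ d' ∈ M.sems, ∀ x y z u : Circle,
    x ≠ y → x ≠ z → x ≠ u → y ≠ z → y ≠ u → z ≠ u →
    AvoidsRemote d {x, y, z, u} → AvoidsRemote d' {g x, g y, g z, g u} →
    dR d' (g x) (g z) * dR d' (g y) (g u) * (dR d x u * dR d y z)
      = dR d x z * dR d y u * (dR d' (g x) (g u) * dR d' (g y) (g z))

theorem map_not_isDiag (g : Circle ≃ Circle) (z : Sym2 Circle) (h : ¬ z.IsDiag) :
    ¬ (z.map g).IsDiag := by
  induction z using Sym2.ind with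
  | _ x y =>
    rw [Sym2.map_pair_eq, Sym2.mk_isDiag_iff]
    rw [Sym2.mk_isDiag_iff] at h
    exact fun hg => h (g.injective hg)

/-- The map of events induced by a bijection of the circle. -/
def emap (g : Circle ≃ Circle) (e : Event) : Event :=
  ⟨e.1.map g, map_not_isDiag g e.1 e.2⟩

end Paper

open Topology

theorem StrictAntiOn.continuousAt_of_image_mem_nhds {α β : Type*} [LinearOrder α]
    [TopologicalSpace α] [OrderTopology α] [LinearOrder β] [TopologicalSpace β]
    [OrderTopology β] [DenselyOrdered β] {f : α → β} {s : Set α} {a : α}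
    (h_anti : StrictAntiOn f s) (hs : s ∈ 𝓝 a) (hfs : f '' s ∈ 𝓝 (f a)) : ContinuousAt f a :=
  h_anti.dual_right.continuousAt_of_image_mem_nhds hs hfs

theorem strictAntiOn_of_nested {α : Type*} [LinearOrder α] {f : α → α} {s : Set α} {c : α}
    (hc : f c = c) (hsep : ∀ x ∈ s, x ≠ c → c ∈ uIoo x (f x))
    (hnest : ∀ x ∈ s, ∀ y ∈ s, x ≠ c → y ≠ c → y ∈ uIoo x (f x) → f y ∈ uIoo x (f x)) :
    StrictAntiOn f s := by
  simp only [uIoo_eq_union, mem_union, mem_Ioo] at hsep hnest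
  intro x hx y hy hxy
  rcases lt_trichotomy x c with hxc | rfl | hcx
  · have hfx : c < f x := by rcases hsep x hx hxc.ne with h | h <;> order
    rcases lt_trichotomy y c with hyc | rfl | hcy
    · rcases hnest x hx y hy hxc.ne hyc.ne (.inl ⟨hxy, by order⟩) with h | h <;> order
    · order
    · rcases hsep y hy hcy.ne' with h | h <;> order
  · rcases hsep y hy (ne_of_gt hxy) with h | h <;> order
  · have hfy : f y < c := by rcases hsep y hy (by order) with h | h <;> order
    rcases hsep x hx hcx.ne' with h | h
    · order
    · rcases hnest y hy x hx (by order) hcx.ne' (.inr ⟨by order, hxy⟩) with h' | h' <;> order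

theorem connectedComponentIn_union_eq_left {X : Type*} [TopologicalSpace X] {A B : Set X}
    (hA : IsOpen A) (hB : IsOpen B) (hAB : Disjoint A B) (hA' : IsPreconnected A) {x : X}
    (hx : x ∈ A) : connectedComponentIn (A ∪ B) x = A :=
  (isPreconnected_connectedComponentIn.subset_left_of_subset_union hA hB hAB
    (connectedComponentIn_subset _ _) ⟨x, mem_connectedComponentIn (.inl hx), hx⟩).antisymm
    (hA'.subset_connectedComponentIn hx subset_union_left)

theorem mem_connectedComponentIn_union_iff {X : Type*} [TopologicalSpace X] {A B : Set X}
    (hA : IsOpen A) (hB : IsOpen B) (hAB : Disjoint A B) (hA' : IsPreconnected A)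
    (hB' : IsPreconnected B) {x y : X} (hx : x ∈ A ∪ B) (hy : y ∈ A ∪ B) :
    y ∈ connectedComponentIn (A ∪ B) x ↔ (x ∈ A ↔ y ∈ A) := by
  rcases hx with hx | hx
  · rw [connectedComponentIn_union_eq_left hA hB hAB hA' hx]
    exact (iff_true_left hx).symm
  · rw [union_comm, connectedComponentIn_union_eq_left hB hA hAB.symm hB' hx]
    have hxA : x ∉ A := hAB.notMem_of_mem_right hx
    have : y ∈ B ↔ y ∉ A := ⟨fun h => hAB.notMem_of_mem_right h, hy.resolve_left⟩
    rw [this]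
    tauto

namespace Paper

open Complex Real

/-- The angle of `x` in the chart of the circle cut at `p`: it lies in `(-π, π]`, equals `π`
exactly at `p`, and is continuous away from `p`. Its inverse is `expAt p`. -/
def angleAt (p x : Circle) : ℝ := arg ((x / p * Circle.exp π : Circle) : ℂ)

def expAt (p : Circle) (t : ℝ) : Circle := Circle.exp (t + π) * p

section Chart

variable (p : Circle)

lemma angleAt_mem_Ioc (x : Circle) : angleAt p x ∈ Ioc (-π) π := arg_mem_Ioc _

lemma angleAt_expAt {t : ℝ} (ht : t ∈ Ioc (-π) π) : angleAt p (expAt p t) = t := by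
  rw [angleAt, expAt, mul_div_cancel_right, ← Circle.exp_add, add_assoc, ← two_mul,
    Circle.exp_add_two_pi, Circle.arg_exp ht.1 ht.2]

lemma expAt_angleAt (x : Circle) : expAt p (angleAt p x) = x := by
  rw [angleAt, expAt, Circle.exp_add, Circle.exp_arg, mul_assoc (x / p),
    ← Circle.exp_add, ← two_mul, Circle.exp_two_pi, mul_one, div_mul_cancel]

lemma angleAt_injective : Function.Injective (angleAt p) :=
  Function.LeftInverse.injective (expAt_angleAt p)

lemma angleAt_self : angleAt p p = π := by
  have := angleAt_expAt p (t := π) ⟨by linarith [pi_pos], le_rfl⟩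
  rwa [expAt, ← two_mul, Circle.exp_two_pi, one_mul] at this

lemma angleAt_lt_pi {x : Circle} (hx : x ≠ p) : angleAt p x < π :=
  (angleAt_mem_Ioc p x).2.lt_of_ne fun h => hx (angleAt_injective p (h.trans (angleAt_self p).symm))

lemma expAt_ne_self {t : ℝ} (ht : t ∈ Ioo (-π) π) : expAt p t ≠ p := fun h => by
  have := angleAt_expAt p (Ioo_subset_Ioc_self ht)
  rw [h, angleAt_self] at this
  exact ht.2.ne this.symm

lemma continuousAt_angleAt {x : Circle} (hx : x ≠ p) : ContinuousAt (angleAt p) x := by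
  refine (continuousAt_arg ?_).comp (by fun_prop)
  rw [mem_slitPlane_iff_arg]
  exact ⟨(angleAt_lt_pi p hx).ne, Circle.coe_ne_zero _⟩

lemma continuous_expAt : Continuous (expAt p) := by
  unfold expAt; fun_prop

lemma isOpenMap_expAt : IsOpenMap (expAt p) :=
  (Homeomorph.mulRight p).isOpenMap.comp
    (isLocalHomeomorph_circleExp.isOpenMap.comp (Homeomorph.addRight π).isOpenMap)

lemma periodic_expAt : Function.Periodic (expAt p) (2 * π) := fun t => by
  rw [expAt, expAt, add_right_comm, Circle.exp_add_two_pi]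

lemma injOn_expAt (a : ℝ) : InjOn (expAt p) (Ioc a (a + 2 * π)) := by
  intro s hs t ht hst
  have := Circle.exp_injOn_Ioc (a := a + π) (b := a + π + 2 * π) (by linarith)
    ⟨by linarith [hs.1], by linarith [hs.2]⟩ ⟨by linarith [ht.1], by linarith [ht.2]⟩
    (mul_right_cancel hst)
  linarith

lemma expAt_image_Ioc (a : ℝ) : expAt p '' Ioc a (a + 2 * π) = univ := by
  rw [(periodic_expAt p).image_Ioc two_pi_pos, eq_univ_iff_forall]
  exact fun x => ⟨_, expAt_angleAt p x⟩

lemma mem_expAt_image_iff {s : Set ℝ} (hs : s ⊆ Ioc (-π) π) {x : Circle} :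
    x ∈ expAt p '' s ↔ angleAt p x ∈ s := by
  refine ⟨?_, fun h => ⟨_, h, expAt_angleAt p x⟩⟩
  rintro ⟨t, ht, rfl⟩
  rwa [angleAt_expAt p (hs ht)]

def chartMap (f : Circle → Circle) (t : ℝ) : ℝ := angleAt p (f (expAt p t))

lemma expAt_comp_chartMap (f : Circle → Circle) : expAt p ∘ chartMap p f ∘ angleAt p = f := by
  ext1 x
  simp only [Function.comp_apply, chartMap, expAt_angleAt]

end Chart

lemma separatesPts_comm {x y r s : Circle} : SeparatesPts x y r s ↔ SeparatesPts y x r s := by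
  rw [SeparatesPts, SeparatesPts, pair_comm]

lemma SeparatesPts.symm_right {x y r s : Circle} (h : SeparatesPts x y r s) :
    SeparatesPts x y s r :=
  ⟨h.2.1, h.1, fun hr => h.2.2 (connectedComponentIn_eq hr ▸ mem_connectedComponentIn h.2.1)⟩

lemma compl_pair_expAt (p : Circle) {a b : ℝ} (hab : a < b) (hba : b < a + 2 * π) :
    ({expAt p a, expAt p b}ᶜ : Set Circle) =
      expAt p '' Ioo a b ∪ expAt p '' Ioo b (a + 2 * π) := by
  have hinj := injOn_expAt p a
  ext w
  obtain ⟨t, ht, rfl⟩ : w ∈ expAt p '' Ioc a (a + 2 * π) := by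
    rw [expAt_image_Ioc]; trivial
  rw [← periodic_expAt p a]
  simp only [mem_compl_iff, mem_insert_iff, mem_singleton_iff, not_or, mem_union,
    hinj.eq_iff ht ⟨by linarith [pi_pos], le_rfl⟩, hinj.eq_iff ht ⟨hab, hba.le⟩,
    hinj.mem_image_iff (Ioo_subset_Ioc_self.trans (Ioc_subset_Ioc_right hba.le)) ht,
    hinj.mem_image_iff (Ioo_subset_Ioc_self.trans (Ioc_subset_Ioc_left hab.le)) ht]
  grind

lemma disjoint_expAt_image (p : Circle) {a b : ℝ} (hab : a < b) (hba : b < a + 2 * π) :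
    Disjoint (expAt p '' Ioo a b) (expAt p '' Ioo b (a + 2 * π)) := by
  rw [Set.disjoint_left]
  rintro _ ⟨t, ht, rfl⟩ ⟨t', ht', h⟩
  have := injOn_expAt p a ⟨ht'.1.trans' hab, ht'.2.le⟩ ⟨ht.1, ht.2.le.trans hba.le⟩ h
  linarith [ht.2, ht'.1]

lemma separatesPts_expAt_iff (p : Circle) {a b : ℝ} (hab : a < b) (hba : b < a + 2 * π)
    {r s : Circle} (hr : r ∉ ({expAt p a, expAt p b} : Set Circle))
    (hs : s ∉ ({expAt p a, expAt p b} : Set Circle)) :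
    SeparatesPts (expAt p a) (expAt p b) r s ↔
      (r ∈ expAt p '' Ioo a b ↔ s ∉ expAt p '' Ioo a b) := by
  rw [← mem_compl_iff, compl_pair_expAt p hab hba] at hr hs
  have hdisj := disjoint_expAt_image p hab hba
  rw [SeparatesPts, compl_pair_expAt p hab hba, mem_connectedComponentIn_union_iff
    (isOpenMap_expAt p _ isOpen_Ioo) (isOpenMap_expAt p _ isOpen_Ioo) hdisj
    (isPreconnected_Ioo.image _ (continuous_expAt p).continuousOn)
    (isPreconnected_Ioo.image _ (continuous_expAt p).continuousOn) hr hs]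
  have : s ∉ expAt p '' Ioo a b ↔ s ∈ expAt p '' Ioo b (a + 2 * π) :=
    ⟨hs.resolve_left, fun h => hdisj.notMem_of_mem_right h⟩
  tauto

lemma separatesPts_iff_angleAt (p : Circle) {x y r s : Circle} (hxy : x ≠ y)
    (hr : r ∉ ({x, y} : Set Circle)) (hs : s ∉ ({x, y} : Set Circle)) :
    SeparatesPts x y r s ↔ (angleAt p r ∈ uIoo (angleAt p x) (angleAt p y) ↔
      angleAt p s ∉ uIoo (angleAt p x) (angleAt p y)) := by
  wlog hlt : angleAt p x < angleAt p y generalizing x y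
  · rw [pair_comm] at hr hs
    rw [separatesPts_comm, uIoo_comm]
    exact this hxy.symm hr hs <|
      (not_lt.mp hlt).lt_of_ne fun h => hxy (angleAt_injective p h).symm
  have hx := angleAt_mem_Ioc p x
  have hy := angleAt_mem_Ioc p y
  rw [← expAt_angleAt p x, ← expAt_angleAt p y] at hr hs ⊢
  rw [separatesPts_expAt_iff p hlt (by linarith [hx.1, hy.2]) hr hs, angleAt_expAt p hx,
    angleAt_expAt p hy, uIoo_of_lt hlt,
    mem_expAt_image_iff p (Ioo_subset_Ioc_self.trans (Ioc_subset_Ioc hx.1.le hy.2)),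
    mem_expAt_image_iff p (Ioo_subset_Ioc_self.trans (Ioc_subset_Ioc hx.1.le hy.2))]

lemma EventSep.separatesPts {a b : Event} {x y r s : Circle} (hab : EventSep a b)
    (ha : a.1 = s(x, y)) (hb : b.1 = s(r, s)) : SeparatesPts x y r s := by
  obtain ⟨x', y', r', s', ha', hb', hsep⟩ := hab
  rw [ha, Sym2.eq_iff] at ha'
  rw [hb, Sym2.eq_iff] at hb'
  rcases ha' with ⟨rfl, rfl⟩ | ⟨rfl, rfl⟩ <;> rcases hb' with ⟨rfl, rfl⟩ | ⟨rfl, rfl⟩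
  · exact hsep
  · exact hsep.symm_right
  · exact separatesPts_comm.mp hsep
  · exact (separatesPts_comm.mp hsep).symm_right

lemma eventPts_eq {e : Event} {z u : Circle} (he : e.1 = s(z, u)) : EventPts e = {z, u} := by
  ext w
  simp [EventPts, he, Sym2.mem_iff]

lemma exists_refSpec {line : Event → Set Event} (h4 : AxH4 line) (e : Event) :
    ∃ ρ : Circle → Circle, RefSpec line e ρ := by
  classical
  choose f hf using fun x (hx : x ∉ EventPts e) => (h4 e x hx).exists
  refine ⟨fun x => if hx : x ∈ EventPts e then x else Sym2.Mem.other (hf x hx).2,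
    fun x hx => dif_pos hx, fun x hx => ?_⟩
  simp only [dif_neg hx]
  exact ⟨Sym2.other_ne (f x hx).2 (hf x hx).2, f x hx, (hf x hx).1, (hf x hx).2,
    Sym2.other_mem (hf x hx).2⟩

lemma expAt_notMem_eventPts {e : Event} {z u : Circle} (he : e.1 = s(z, u)) {t : ℝ}
    (ht : t ∈ Ioo (-π) π) (htz : t ≠ angleAt u z) : expAt u t ∉ EventPts e := by
  rw [eventPts_eq he]
  rintro (h | h)
  · exact htz (h ▸ angleAt_expAt u (Ioo_subset_Ioc_self ht)).symm
  · exact expAt_ne_self u ht h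

namespace RefSpec

variable {line : Event → Set Event} {e : Event} {ρ : Circle → Circle} {z u : Circle}

lemma chord (hρ : RefSpec line e ρ) {x : Circle} (hx : x ∉ EventPts e) :
    ∃ a ∈ line e, a.1 = s(x, ρ x) := by
  obtain ⟨hne, a, ha, hxa, hρxa⟩ := hρ.2 x hx
  exact ⟨a, ha, (Sym2.mem_and_mem_iff hne.symm).mp ⟨hxa, hρxa⟩⟩

lemma separatesPts (h2 : AxH2 line) (he : e.1 = s(z, u)) (hρ : RefSpec line e ρ) {x : Circle}
    (hx : x ∉ EventPts e) : SeparatesPts x (ρ x) z u := by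
  obtain ⟨a, ha, hax⟩ := hρ.chord hx
  exact (h2 e a ha).separatesPts hax he

lemma not_separatesPts (h3 : AxH3 line) (hρ : RefSpec line e ρ) {x x' : Circle}
    (hx : x ∉ EventPts e) (hx' : x' ∉ EventPts e) : ¬ SeparatesPts x (ρ x) x' (ρ x') := by
  obtain ⟨a, ha, hax⟩ := hρ.chord hx
  obtain ⟨a', ha', hax'⟩ := hρ.chord hx'
  exact fun hsep => h3 e a a' ha ha' ⟨x, ρ x, x', ρ x', hax, hax', hsep⟩

lemma map_notMem (h2 : AxH2 line) (he : e.1 = s(z, u)) (hρ : RefSpec line e ρ) {x : Circle}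
    (hx : x ∉ EventPts e) : ρ x ∉ EventPts e := by
  have hsep := hρ.separatesPts h2 he hx
  rw [eventPts_eq he]
  rintro (h | h)
  · exact hsep.1 (.inr h.symm)
  · exact hsep.2.1 (.inr h.symm)

lemma involutive (h2 : AxH2 line) (h4 : AxH4 line) (he : e.1 = s(z, u))
    (hρ : RefSpec line e ρ) : Function.Involutive ρ := by
  intro x
  by_cases hx : x ∈ EventPts e
  · rw [hρ.1 x hx, hρ.1 x hx]
  have hρx := hρ.map_notMem h2 he hx
  obtain ⟨a, ha, hax⟩ := hρ.chord hx
  obtain ⟨b, hb, hbx⟩ := hρ.chord hρx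
  have hba : b = a := (h4 e (ρ x) hρx).unique ⟨hb, hbx ▸ Sym2.mem_mk_left _ _⟩
    ⟨ha, hax ▸ Sym2.mem_mk_right _ _⟩
  have hmem : ρ (ρ x) ∈ s(x, ρ x) := hax ▸ hba ▸ hbx ▸ Sym2.mem_mk_right _ _
  exact (Sym2.mem_iff.mp hmem).resolve_right (hρ.2 _ hρx).1

lemma angleAt_mem_uIoo (h2 : AxH2 line) (he : e.1 = s(z, u)) (hρ : RefSpec line e ρ)
    {x : Circle} (hx : x ∉ EventPts e) :
    angleAt u z ∈ uIoo (angleAt u x) (angleAt u (ρ x)) := by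
  have hsep := hρ.separatesPts h2 he hx
  have hu : angleAt u u ∉ uIoo (angleAt u x) (angleAt u (ρ x)) := fun h => by
    rw [angleAt_self] at h
    exact h.2.not_ge (max_le (angleAt_mem_Ioc u x).2 (angleAt_mem_Ioc u _).2)
  rw [separatesPts_iff_angleAt u (hρ.2 x hx).1.symm hsep.1 hsep.2.1] at hsep
  exact hsep.mpr hu

lemma angleAt_map_mem_uIoo (h2 : AxH2 line) (h3 : AxH3 line) (h4 : AxH4 line)
    (he : e.1 = s(z, u)) (hρ : RefSpec line e ρ) (p : Circle) {x x' : Circle}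
    (hx : x ∉ EventPts e) (hx' : x' ∉ EventPts e)
    (h : angleAt p x' ∈ uIoo (angleAt p x) (angleAt p (ρ x))) :
    angleAt p (ρ x') ∈ uIoo (angleAt p x) (angleAt p (ρ x)) := by
  have hinv := hρ.involutive h2 h4 he
  have hx'x : x' ≠ x := fun hxx => left_notMem_uIoo (hxx ▸ h)
  have hx'ρx : x' ≠ ρ x := fun hxx => right_notMem_uIoo (hxx ▸ h)
  have hr : x' ∉ ({x, ρ x} : Set Circle) := by simp [hx'x, hx'ρx]
  have hs : ρ x' ∉ ({x, ρ x} : Set Circle) := by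
    simp only [mem_insert_iff, mem_singleton_iff, not_or]
    exact ⟨fun hxx => hx'ρx (hinv x' ▸ congrArg ρ hxx), fun hxx => hx'x (hinv.injective hxx)⟩
  have hns := hρ.not_separatesPts h3 hx hx'
  rw [separatesPts_iff_angleAt p (hρ.2 x hx).1.symm hr hs] at hns
  tauto

lemma strictAntiOn_chartMap (h2 : AxH2 line) (h3 : AxH3 line) (h4 : AxH4 line)
    (he : e.1 = s(z, u)) (hρ : RefSpec line e ρ) : StrictAntiOn (chartMap u ρ) (Ioo (-π) π) := by
  have hz : z ∈ EventPts e := by simp [eventPts_eq he]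
  have hchart : ∀ t ∈ Ioo (-π) π, angleAt u (expAt u t) = t :=
    fun t ht => angleAt_expAt u (Ioo_subset_Ioc_self ht)
  refine strictAntiOn_of_nested (c := angleAt u z)
    (by simp only [chartMap, expAt_angleAt, hρ.1 z hz]) (fun t ht htz => ?_)
    (fun t ht t' ht' htz ht'z h => ?_)
  · simpa only [chartMap, hchart t ht] using
      hρ.angleAt_mem_uIoo h2 he (expAt_notMem_eventPts he ht htz)
  · have := hρ.angleAt_map_mem_uIoo h2 h3 h4 he u (expAt_notMem_eventPts he ht htz)
      (expAt_notMem_eventPts he ht' ht'z)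
    rw [hchart t ht, hchart t' ht'] at this
    exact this h

lemma image_chartMap (h2 : AxH2 line) (h4 : AxH4 line) (he : e.1 = s(z, u))
    (hρ : RefSpec line e ρ) : chartMap u ρ '' Ioo (-π) π = Ioo (-π) π := by
  have hinv := hρ.involutive h2 h4 he
  have hu : ρ u = u := hρ.1 u (by simp [eventPts_eq he])
  have hmaps : MapsTo (chartMap u ρ) (Ioo (-π) π) (Ioo (-π) π) := fun t ht =>
    ⟨(angleAt_mem_Ioc u _).1,
      angleAt_lt_pi u fun h => expAt_ne_self u ht (hinv.injective (h.trans hu.symm))⟩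
  refine hmaps.image_subset.antisymm fun t ht => ⟨_, hmaps ht, ?_⟩
  rw [chartMap, chartMap, expAt_angleAt, hinv, angleAt_expAt u (Ioo_subset_Ioc_self ht)]

lemma continuousAt (h2 : AxH2 line) (h3 : AxH3 line) (h4 : AxH4 line) (he : e.1 = s(z, u))
    (hρ : RefSpec line e ρ) {w : Circle} (hw : w ≠ u) : ContinuousAt ρ w := by
  have hw' : angleAt u w ∈ Ioo (-π) π := ⟨(angleAt_mem_Ioc u w).1, angleAt_lt_pi u hw⟩
  have himage := hρ.image_chartMap h2 h4 he
  have hG : ContinuousAt (chartMap u ρ) (angleAt u w) :=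
    (hρ.strictAntiOn_chartMap h2 h3 h4 he).continuousAt_of_image_mem_nhds
      (isOpen_Ioo.mem_nhds hw') <| by
        rw [himage]
        exact isOpen_Ioo.mem_nhds (himage ▸ mem_image_of_mem _ hw')
  rw [← expAt_comp_chartMap u ρ]
  exact (continuous_expAt u).continuousAt.comp (hG.comp (continuousAt_angleAt u hw))

lemma continuous (h2 : AxH2 line) (h3 : AxH3 line) (h4 : AxH4 line) (he : e.1 = s(z, u))
    (hρ : RefSpec line e ρ) : Continuous ρ := by
  have hzu : z ≠ u := fun h => e.2 (by rw [he, h, Sym2.mk_isDiag_iff])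
  refine continuous_iff_continuousAt.mpr fun w => ?_
  rcases eq_or_ne w u with rfl | hw
  · exact hρ.continuousAt h2 h3 h4 (he.trans Sym2.eq_swap) hzu.symm
  · exact hρ.continuousAt h2 h3 h4 he hw

end RefSpec

theorem stmt6_general (line : Event → Set Event)
    (h2 : AxH2 line) (h3 : AxH3 line)
    (h4 : AxH4 line) (e : Event) :
    (∃ ρ : Circle → Circle, RefSpec line e ρ) ∧
    ∀ ρ : Circle → Circle, RefSpec line e ρ →
      Function.Involutive ρ ∧ IsHomeomorph ρ := by
  obtain ⟨z, u, he⟩ : ∃ z u : Circle, e.1 = s(z, u) := Sym2.inductionOn e.1 fun x y => ⟨x, y, rfl⟩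
  refine ⟨exists_refSpec h4 e, fun ρ hρ => ?_⟩
  have hinv := hρ.involutive h2 h4 he
  exact ⟨hinv, isHomeomorph_iff_continuous_bijective.mpr
    ⟨hρ.continuous h2 h3 h4 he, hinv.bijective⟩⟩

/-- in a space satisfying Axioms (h1)–(h5), for every event `e` the
reflection `ρ_e` with respect to `e` exists and is an involutive homeomorphism of
the circle. -/
theorem stmt6 (line : Event → Set Event)
    (h1 : AxH1 (Set.range line) line) (h2 : AxH2 line) (h3 : AxH3 line)
    (h4 : AxH4 line) (h5 : AxH5 line) (e : Event) :
    (∃ ρ : Circle → Circle, RefSpec line e ρ) ∧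
    ∀ ρ : Circle → Circle, RefSpec line e ρ →
      Function.Involutive ρ ∧ IsHomeomorph ρ :=
  stmt6_general line h2 h3 h4 e

end Paper
end
end

section
/- Let (aY, H) be a causal space (Axioms (h1)–(h6)). Then: (a) for any event e, the timelike line h_e, with the topology induced from aY, is homeomorphic to ℝ, and the boundary of its closure in aY ∪ S¹ is e; (b) for any two distinct events a, a' there is a timelike line containing both if and only if a and a' are in the strong causal relation, and in this case such a timelike line is unique; (c) two distinct timelike lines h_e, h_{e'} have a common event if and only if e and e' are in the strong causal relation, and in this case the common event is unique; (d) a light line p_x intersects a timelike line h_e if and only if x ∉ e, and in this case the common event is unique. -/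
open Set
open scoped ENNReal

noncomputable section

/-!
Write `e = {x, x·e^{iθ}}` and measure angles from `x`. By (h2) every event of `h_e` has one
point at an angle `s ∈ (0, θ)` and the other at an angle `g s ∈ (θ, 2π)`; by (h4) each angle
of either arc occurs exactly once, and by (h3) `g` is strictly decreasing. A decreasing
bijection of intervals is continuous, so `s ↦ {s, g s}` maps `(0, θ)` homeomorphically onto
`h_e`, and, extended by `g 0 = 2π` and `g θ = θ`, maps `[0, θ]` onto the closure of `h_e`,
which adds the two diagonal points over `e`.

If `a` and `b` are in the strong causal relation, both points of `b` lie in one arc of `a`,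
so in suitable coordinates `a = {x, x·e^{iθ}}` and `b = {x·e^{is₀}, x·e^{it₀}}` with
`0 < s₀ < t₀ < θ`. On `[s₀, t₀]` the partner functions of `h_a` and `h_b` cross by the
intermediate value theorem; the crossing event `d` lies on both lines, so `a, b ∈ h_d` by (h5).
-/

namespace Paper

open Real

lemma connectedComponentIn_eq_of_union {X : Type*} [TopologicalSpace X] {S A B : Set X}
    (hS : S = A ∪ B) (hA : IsOpen A) (hB : IsOpen B) (hAB : Disjoint A B)
    (hA' : IsPreconnected A) {z : X} (hz : z ∈ A) : connectedComponentIn S z = A := by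
  have hzS : z ∈ S := hS ▸ Or.inl hz
  refine (isPreconnected_connectedComponentIn.subset_left_of_subset_union hA hB hAB
      (hS ▸ connectedComponentIn_subset S z) ⟨z, mem_connectedComponentIn hzS, hz⟩).antisymm
    (hA'.subset_connectedComponentIn hz (hS ▸ subset_union_left))

section Sym2Topology

variable {X : Type*}

lemma quot_mk_sym2_preimage_image (D : Set (X × X)) :
    Quot.mk (Sym2.Rel X) ⁻¹' (Quot.mk (Sym2.Rel X) '' D) = D ∪ Prod.swap ⁻¹' D := by
  ext ⟨a, b⟩
  simp only [mem_preimage, mem_image, Prod.exists, mem_union, Prod.swap_prod_mk]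
  constructor
  · rintro ⟨c, d, hcd, h⟩
    rcases Sym2.eq_iff.1 h with ⟨rfl, rfl⟩ | ⟨rfl, rfl⟩
    exacts [Or.inl hcd, Or.inr hcd]
  · rintro (h | h)
    exacts [⟨a, b, h, rfl⟩, ⟨b, a, h, Sym2.eq_swap⟩]

variable [TopologicalSpace X]

lemma isOpenMap_quot_mk_sym2 : IsOpenMap (Quot.mk (Sym2.Rel X)) := fun O hO => by
  rw [← isQuotientMap_quot_mk.isOpen_preimage, quot_mk_sym2_preimage_image]
  exact hO.union (hO.preimage continuous_swap)

lemma isClosed_quot_mk_sym2_image [T2Space X] {D : Set (X × X)} (hD : IsCompact D) :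
    IsClosed (Quot.mk (Sym2.Rel X) '' D) := by
  rw [← isQuotientMap_quot_mk.isClosed_preimage, quot_mk_sym2_preimage_image]
  exact (hD.union ((Homeomorph.prodComm X X).isCompact_preimage.2 hD)).isClosed

end Sym2Topology

lemma continuousOn_Icc_of_strictAntiOn {f : ℝ → ℝ} {a b c d : ℝ}
    (hf : StrictAntiOn f (Icc a b)) (hmaps : MapsTo f (Icc a b) (Icc c d))
    (hsurj : SurjOn f (Icc a b) (Icc c d)) : ContinuousOn f (Icc a b) := by
  let g : Icc a b → (Icc c d)ᵒᵈ := fun s => OrderDual.toDual ⟨f s, hmaps s.2⟩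
  have hg : Monotone g := fun s s' hss' => hf.antitoneOn s.2 s'.2 hss'
  have hg' : Function.Surjective g := fun r => by
    obtain ⟨s, hs, hsr⟩ := hsurj (OrderDual.ofDual r).2
    exact ⟨⟨s, hs⟩, Subtype.ext hsr⟩
  rw [continuousOn_iff_continuous_domRestrict]
  exact continuous_subtype_val.comp (continuous_ofDual.comp (hg.continuous_of_surjective hg'))

lemma nonempty_Ioo_homeomorph_real {a b : ℝ} (hab : a < b) : Nonempty (Ioo a b ≃ₜ ℝ) := by
  have hk : 0 < π / (b - a) := div_pos pi_pos (sub_pos.2 hab)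
  let A := affineHomeomorph (π / (b - a)) (-(π / 2) - π / (b - a) * a) hk.ne'
  have hA : A '' Ioo a b = Ioo (-(π / 2)) (π / 2) := by
    rw [affineHomeomorph_image_Ioo _ _ _ _ hk]
    have hba : b - a ≠ 0 := (sub_pos.2 hab).ne'
    congr 1
    · ring
    · field_simp
      ring
  exact ⟨((A.image (Ioo a b)).trans (Homeomorph.setCongr hA)).trans
    tanOrderIso.toHomeomorph⟩

lemma SeparatesPts.swap_left {x y z u : Circle} (h : SeparatesPts x y z u) :
    SeparatesPts y x z u := by
  rwa [SeparatesPts, pair_comm]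

lemma SeparatesPts.swap_right {x y z u : Circle} (h : SeparatesPts x y z u) :
    SeparatesPts x y u z := by
  obtain ⟨hz, hu, hzu⟩ := h
  refine ⟨hu, hz, fun hz' => hzu ?_⟩
  rw [← connectedComponentIn_eq hz']
  exact mem_connectedComponentIn hu

lemma SeparatesPts.third_ne {x y z u : Circle} (h : SeparatesPts x y z u) : z ≠ x ∧ z ≠ y := by
  simpa [not_or] using h.1

lemma SeparatesPts.fourth_ne {x y z u : Circle} (h : SeparatesPts x y z u) :
    u ≠ x ∧ u ≠ y := by
  simpa [not_or] using h.2.1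

lemma SeparatesPts.first_ne_second {x y z u : Circle} (h : SeparatesPts x y z u) : x ≠ y := by
  rintro rfl
  obtain ⟨hz, hu, hzu⟩ := h
  rw [pair_eq_singleton] at hz hu hzu
  rw [(Circle.isPathConnected_compl_singleton x).isConnected.isPreconnected
    |>.connectedComponentIn hz] at hzu
  exact hzu hu

section Circle

def chart (x : Circle) (t : ℝ) : Circle := x * Circle.exp t

variable {x : Circle} {θ r s s' t t' : ℝ}

lemma continuous_chart (x : Circle) : Continuous (chart x) :=
  continuous_const.mul Circle.exp.continuous

lemma isOpenMap_chart (x : Circle) : IsOpenMap (chart x) :=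
  (Homeomorph.mulLeft x).isOpenMap.comp isLocalHomeomorph_circleExp.isOpenMap

@[simp] lemma chart_zero (x : Circle) : chart x 0 = x := by simp [chart]

@[simp] lemma chart_two_pi (x : Circle) : chart x (2 * π) = x := by simp [chart]

lemma chart_chart (x : Circle) (s t : ℝ) : chart (chart x s) t = chart x (s + t) := by
  simp [chart, Circle.exp_add, mul_assoc]

lemma injOn_chart (x : Circle) : InjOn (chart x) (Ico 0 (2 * π)) :=
  (mul_right_injective x).comp_injOn (Circle.exp_injOn_Ico (by simp))

lemma chart_inj (hs : s ∈ Ioo 0 (2 * π)) (ht : t ∈ Ioo 0 (2 * π)) :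
    chart x s = chart x t ↔ s = t :=
  (injOn_chart x).eq_iff (Ioo_subset_Ico_self hs) (Ioo_subset_Ico_self ht)

lemma chart_ne_self (ht : t ∈ Ioo 0 (2 * π)) : chart x t ≠ x := fun h =>
  ht.1.ne' ((injOn_chart x).eq_iff (Ioo_subset_Ico_self ht) ⟨le_rfl, by simp [pi_pos]⟩
    |>.1 (h.trans (chart_zero x).symm))

lemma exists_chart_eq {z : Circle} (h : z ≠ x) : ∃ t ∈ Ioo 0 (2 * π), chart x t = z :=
  ⟨Circle.angleDiff x z, ⟨Circle.angleDiff_pos h.symm, Circle.angleDiff_lt_two_pi x z⟩,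
    by rw [chart, mul_comm, Circle.exp_angleDiff_mul]⟩

lemma chart_mem_chart_image_iff {I : Set ℝ} (hI : I ⊆ Ioo 0 (2 * π))
    (ht : t ∈ Ioo 0 (2 * π)) : chart x t ∈ chart x '' I ↔ t ∈ I :=
  (injOn_chart x).mem_image_iff (hI.trans Ioo_subset_Ico_self) (Ioo_subset_Ico_self ht)

lemma compl_pair_chart (hθ : θ ∈ Ioo 0 (2 * π)) :
    ({x, chart x θ}ᶜ : Set Circle) = chart x '' Ioo 0 θ ∪ chart x '' Ioo θ (2 * π) := by
  ext z
  simp only [mem_compl_iff, mem_insert_iff, mem_singleton_iff, not_or, ← image_union]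
  constructor
  · rintro ⟨hzx, hzθ⟩
    obtain ⟨t, ht, rfl⟩ := exists_chart_eq hzx
    refine ⟨t, ?_, rfl⟩
    rcases lt_trichotomy t θ with h | rfl | h
    exacts [Or.inl ⟨ht.1, h⟩, absurd rfl hzθ, Or.inr ⟨h, ht.2⟩]
  · rintro ⟨t, ht, rfl⟩
    have ht' : t ∈ Ioo 0 (2 * π) := by
      rcases ht with ht | ht
      exacts [⟨ht.1, ht.2.trans hθ.2⟩, ⟨hθ.1.trans ht.1, ht.2⟩]
    refine ⟨chart_ne_self ht', fun h => ?_⟩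
    rcases ht with ht | ht
    exacts [ht.2.ne ((chart_inj ht' hθ).1 h), ht.1.ne' ((chart_inj ht' hθ).1 h)]

lemma disjoint_chart_image_Ioo (hθ : θ ∈ Ioo 0 (2 * π)) :
    Disjoint (chart x '' Ioo 0 θ) (chart x '' Ioo θ (2 * π)) := by
  rw [Set.disjoint_left]
  rintro _ ⟨s, hs, rfl⟩ ⟨t, ht, hts⟩
  rw [chart_inj ⟨hθ.1.trans ht.1, ht.2⟩ ⟨hs.1, hs.2.trans hθ.2⟩] at hts
  exact (hs.2.trans ht.1).ne' hts

lemma connectedComponentIn_compl_pair_chart (hθ : θ ∈ Ioo 0 (2 * π))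
    (hs : s ∈ Ioo 0 (2 * π)) (hsθ : s ≠ θ) :
    connectedComponentIn ({x, chart x θ}ᶜ : Set Circle) (chart x s) =
      chart x '' (if s < θ then Ioo 0 θ else Ioo θ (2 * π)) := by
  have hopen (I : Set ℝ) : IsOpen I → IsOpen (chart x '' I) := isOpenMap_chart x I
  have hconn (a b : ℝ) : IsPreconnected (chart x '' Ioo a b) :=
    isPreconnected_Ioo.image _ (continuous_chart x).continuousOn
  split_ifs with h
  · exact connectedComponentIn_eq_of_union (compl_pair_chart hθ) (hopen _ isOpen_Ioo)
      (hopen _ isOpen_Ioo) (disjoint_chart_image_Ioo hθ) (hconn _ _) ⟨s, ⟨hs.1, h⟩, rfl⟩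
  · exact connectedComponentIn_eq_of_union ((compl_pair_chart hθ).trans (union_comm _ _))
      (hopen _ isOpen_Ioo) (hopen _ isOpen_Ioo) (disjoint_chart_image_Ioo hθ).symm (hconn _ _)
      ⟨s, ⟨lt_of_le_of_ne (not_lt.1 h) hsθ.symm, hs.2⟩, rfl⟩

lemma separatesPts_chart_iff (hθ : θ ∈ Ioo 0 (2 * π)) (hs : s ∈ Ioo 0 (2 * π))
    (ht : t ∈ Ioo 0 (2 * π)) (hsθ : s ≠ θ) (htθ : t ≠ θ) :
    SeparatesPts x (chart x θ) (chart x s) (chart x t) ↔ (s < θ ↔ θ < t) := by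
  have hmem {r : ℝ} (hr : r ∈ Ioo 0 (2 * π)) (hrθ : r ≠ θ) :
      chart x r ∈ ({x, chart x θ}ᶜ : Set Circle) := by
    rw [compl_pair_chart hθ, ← image_union, chart_mem_chart_image_iff
      (union_subset (Ioo_subset_Ioo_right hθ.2.le) (Ioo_subset_Ioo_left hθ.1.le)) hr]
    rcases hrθ.lt_or_gt with h | h
    exacts [Or.inl ⟨hr.1, h⟩, Or.inr ⟨h, hr.2⟩]
  simp only [SeparatesPts, hmem hs hsθ, hmem ht htθ, true_and,
    connectedComponentIn_compl_pair_chart hθ hs hsθ]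
  split_ifs with h
  · rw [chart_mem_chart_image_iff (Ioo_subset_Ioo_right hθ.2.le) ht, mem_Ioo]
    grind
  · rw [chart_mem_chart_image_iff (Ioo_subset_Ioo_left hθ.1.le) ht, mem_Ioo]
    grind

lemma separatesPts_chart_of_lt {a b c d : ℝ} (hab : a < b) (hbc : b < c) (hcd : c < d)
    (hda : d < a + 2 * π) :
    SeparatesPts (chart x a) (chart x c) (chart x b) (chart x d) := by
  have hrebase (r : ℝ) : chart x r = chart (chart x a) (r - a) := by
    rw [chart_chart, add_sub_cancel]
  rw [hrebase b, hrebase c, hrebase d]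
  exact (separatesPts_chart_iff ⟨by linarith, by linarith⟩ ⟨by linarith, by linarith⟩
    ⟨by linarith, by linarith⟩ (by linarith) (by linarith)).2 (iff_of_true (by linarith)
      (by linarith))

lemma SeparatesPts.symm {p q z u : Circle} (h : SeparatesPts p q z u) :
    SeparatesPts z u p q := by
  obtain ⟨θ, hθ, rfl⟩ := exists_chart_eq h.first_ne_second.symm
  obtain ⟨s, hs, rfl⟩ := exists_chart_eq h.third_ne.1
  obtain ⟨t, ht, rfl⟩ := exists_chart_eq h.fourth_ne.1
  have hsθ : s ≠ θ := by rintro rfl; exact h.third_ne.2 rfl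
  have htθ : t ≠ θ := by rintro rfl; exact h.fourth_ne.2 rfl
  have hst := (separatesPts_chart_iff hθ hs ht hsθ htθ).1 h
  rcases hsθ.lt_or_gt with hs' | hs'
  · simpa using (separatesPts_chart_of_lt (x := p) hs' (hst.1 hs') ht.2 (by linarith [hs.1])
      ).swap_right
  · have ht' : t < θ := (not_lt.1 (mt hst.2 hs'.not_gt)).lt_of_ne htθ
    simpa using (separatesPts_chart_of_lt (x := p) ht' hs' hs.2 (by linarith [ht.1])
      ).swap_right.swap_left

lemma chart_mem_mk_chart_iff (hr : r ∈ Ioo 0 (2 * π))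
    (hs : s ∈ Ioo 0 (2 * π)) (ht : t ∈ Ioo 0 (2 * π)) :
    chart x r ∈ s(chart x s, chart x t) ↔ r = s ∨ r = t := by
  rw [Sym2.mem_iff, chart_inj hr hs, chart_inj hr ht]

lemma mk_chart_inj (hs : s ∈ Ioo 0 θ) (hs' : s' ∈ Ioo 0 θ)
    (ht : t ∈ Ioo θ (2 * π)) (ht' : t' ∈ Ioo θ (2 * π))
    (h : s(chart x s, chart x t) = s(chart x s', chart x t')) : s = s' ∧ t = t' := by
  have hθ : θ < 2 * π := ht.1.trans ht.2
  have mem₁ {r : ℝ} (hr : r ∈ Ioo 0 θ) : r ∈ Ioo 0 (2 * π) := ⟨hr.1, hr.2.trans hθ⟩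
  have mem₂ {r : ℝ} (hr : r ∈ Ioo θ (2 * π)) : r ∈ Ioo 0 (2 * π) :=
    ⟨hs.1.trans (hs.2.trans hr.1), hr.2⟩
  rw [Sym2.eq_iff, chart_inj (mem₁ hs) (mem₁ hs'), chart_inj (mem₂ ht) (mem₂ ht'),
    chart_inj (mem₁ hs) (mem₂ ht')] at h
  rcases h with h | ⟨rfl, -⟩
  exacts [h, absurd (hs.2.trans ht'.1) (lt_irrefl _)]

end Circle

section Events

variable {a b e : Event} {x p q z u : Circle} {θ s : ℝ}

lemma exists_eq_mk (e : Event) : ∃ p q : Circle, e.1 = s(p, q) := by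
  induction e.1 using Sym2.ind with
  | _ p q => exact ⟨p, q, rfl⟩

lemma ne_of_eq_mk (h : e.1 = s(p, q)) : p ≠ q := fun hpq =>
  e.2 (by rw [h, hpq]; exact Sym2.mk_isDiag_iff.2 rfl)

lemma eventPts_eq_s7 (h : e.1 = s(p, q)) : EventPts e = {p, q} := by
  ext w
  simp [EventPts, h]

lemma separatesPts_of_eventSep (ha : a.1 = s(p, q)) (hb : b.1 = s(z, u))
    (h : EventSep a b) : SeparatesPts p q z u := by
  obtain ⟨p', q', z', u', ha', hb', hsep⟩ := h
  rw [ha, Sym2.eq_iff] at ha'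
  rw [hb, Sym2.eq_iff] at hb'
  rcases ha' with ⟨rfl, rfl⟩ | ⟨rfl, rfl⟩ <;> rcases hb' with ⟨rfl, rfl⟩ | ⟨rfl, rfl⟩
  exacts [hsep, hsep.swap_right, hsep.swap_left, hsep.swap_left.swap_right]

lemma exists_angles_of_separatesPts (hθ : θ ∈ Ioo 0 (2 * π))
    (h : SeparatesPts x (chart x θ) p q) :
    ∃ s ∈ Ioo 0 θ, ∃ t ∈ Ioo θ (2 * π), s(p, q) = s(chart x s, chart x t) := by
  obtain ⟨s, hs, rfl⟩ := exists_chart_eq h.third_ne.1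
  obtain ⟨t, ht, rfl⟩ := exists_chart_eq h.fourth_ne.1
  have hsθ : s ≠ θ := by rintro rfl; exact h.third_ne.2 rfl
  have htθ : t ≠ θ := by rintro rfl; exact h.fourth_ne.2 rfl
  have hst := (separatesPts_chart_iff hθ hs ht hsθ htθ).1 h
  rcases hsθ.lt_or_gt with hs' | hs'
  · exact ⟨s, ⟨hs.1, hs'⟩, t, ⟨hst.1 hs', ht.2⟩, rfl⟩
  · have ht' : t < θ := (not_lt.1 (mt hst.2 hs'.not_gt)).lt_of_ne htθ
    exact ⟨t, ⟨ht.1, ht'⟩, s, ⟨hs', hs.2⟩, Sym2.eq_swap⟩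

lemma exists_chart_of_not_separatesPts (hpq : p ≠ q) (hz : z ∉ ({p, q} : Set Circle))
    (hu : u ∉ ({p, q} : Set Circle)) (hzu : z ≠ u) (h : ¬ SeparatesPts p q z u) :
    ∃ x θ s t, θ ∈ Ioo 0 (2 * π) ∧ 0 < s ∧ s < t ∧ t < θ ∧
      s(p, q) = s(x, chart x θ) ∧ s(z, u) = s(chart x s, chart x t) := by
  simp only [mem_insert_iff, mem_singleton_iff, not_or] at hz hu
  obtain ⟨θ, hθ, rfl⟩ := exists_chart_eq hpq.symm
  obtain ⟨s, t, hs, ht, hsθ, htθ, hst, hzu'⟩ : ∃ s t, s ∈ Ioo 0 (2 * π) ∧ t ∈ Ioo 0 (2 * π) ∧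
      s ≠ θ ∧ t ≠ θ ∧ s < t ∧ s(z, u) = s(chart p s, chart p t) := by
    obtain ⟨s, hs, rfl⟩ := exists_chart_eq hz.1
    obtain ⟨t, ht, rfl⟩ := exists_chart_eq hu.1
    have hsθ : s ≠ θ := by rintro rfl; exact hz.2 rfl
    have htθ : t ≠ θ := by rintro rfl; exact hu.2 rfl
    rcases (show s ≠ t by rintro rfl; exact hzu rfl).lt_or_gt with hst | hts
    exacts [⟨s, t, hs, ht, hsθ, htθ, hst, rfl⟩, ⟨t, s, ht, hs, htθ, hsθ, hts, Sym2.eq_swap⟩]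
  have hside : ¬ (s < θ ↔ θ < t) := fun hc => h (by
    rw [Sym2.eq_iff] at hzu'
    rcases hzu' with ⟨rfl, rfl⟩ | ⟨rfl, rfl⟩
    exacts [(separatesPts_chart_iff hθ hs ht hsθ htθ).2 hc,
      ((separatesPts_chart_iff hθ hs ht hsθ htθ).2 hc).swap_right])
  rcases htθ.lt_or_gt with htθ' | hθt
  · exact ⟨p, θ, s, t, hθ, hs.1, hst, htθ', rfl, hzu'⟩
  · have hθs : θ < s := (not_lt.1 fun hsθ' => hside (iff_of_true hsθ' hθt)).lt_of_ne hsθ.symm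
    refine ⟨chart p θ, 2 * π - θ, s - θ, t - θ, ⟨by linarith [hθ.2], by linarith [hθ.1]⟩,
      by linarith, by linarith, by linarith [ht.2], ?_, ?_⟩
    · rw [chart_chart, add_sub_cancel, chart_two_pi, Sym2.eq_swap]
    · rwa [chart_chart, chart_chart, add_sub_cancel, add_sub_cancel]

lemma exists_chart_of_strongCausal (h : StrongCausal a b) :
    ∃ x θ s t, θ ∈ Ioo 0 (2 * π) ∧ 0 < s ∧ s < t ∧ t < θ ∧
      a.1 = s(x, chart x θ) ∧ b.1 = s(chart x s, chart x t) := by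
  obtain ⟨p, q, hpq⟩ := exists_eq_mk a
  obtain ⟨z, u, hzu⟩ := exists_eq_mk b
  have hnot {w : Circle} (hw : w ∈ b.1) : w ∉ ({p, q} : Set Circle) := fun hw' =>
    h.2 ⟨w, by simpa [hpq] using hw', hw⟩
  rw [hpq, hzu]
  exact exists_chart_of_not_separatesPts (ne_of_eq_mk hpq) (hnot (by simp [hzu]))
    (hnot (by simp [hzu])) (ne_of_eq_mk hzu) fun hs => h.1 ⟨p, q, z, u, hpq, hzu, hs⟩

lemma chart_notMem_eventPts (hθ : θ ∈ Ioo 0 (2 * π))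
    (he : e.1 = s(x, chart x θ)) (hs : s ∈ Ioo 0 (2 * π)) (hsθ : s ≠ θ) :
    chart x s ∉ EventPts e := by
  rw [eventPts_eq_s7 he, mem_insert_iff, mem_singleton_iff, chart_inj hs hθ, not_or]
  exact ⟨chart_ne_self hs, hsθ⟩

end Events

section Lines

variable {line : Event → Set Event} {a b e e' : Event} {x y p q w : Circle} {θ s t : ℝ}

lemma separatesPts_of_mem_line (h2 : AxH2 line) (ha : a ∈ line e) (hap : a.1 = s(p, q))
    (he : e.1 = s(x, y)) : SeparatesPts x y p q :=
  (separatesPts_of_eventSep hap he (h2 e a ha)).symm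

lemma notMem_eventPts_of_mem_line (h2 : AxH2 line) (ha : a ∈ line e) (hw : w ∈ a.1) :
    w ∉ EventPts e := by
  obtain ⟨p, q, hap⟩ := exists_eq_mk a
  obtain ⟨x, y, hxy⟩ := exists_eq_mk e
  have hsep := separatesPts_of_mem_line h2 ha hap hxy
  rw [eventPts_eq_s7 hxy]
  rw [hap, Sym2.mem_iff] at hw
  rcases hw with rfl | rfl
  exacts [hsep.1, hsep.2.1]

lemma eq_of_mem_line_of_mem (h2 : AxH2 line) (h4 : AxH4 line) (ha : a ∈ line e)
    (hb : b ∈ line e) (hwa : w ∈ a.1) (hwb : w ∈ b.1) : a = b :=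
  (h4 e w (notMem_eventPts_of_mem_line h2 ha hwa)).unique ⟨ha, hwa⟩ ⟨hb, hwb⟩

lemma strongCausal_of_mem_line (h2 : AxH2 line) (h3 : AxH3 line) (h4 : AxH4 line)
    (hab : a ≠ b) (ha : a ∈ line e) (hb : b ∈ line e) : StrongCausal a b :=
  ⟨h3 e a b ha hb, fun ⟨_, hwa, hwb⟩ => hab (eq_of_mem_line_of_mem h2 h4 ha hb hwa hwb)⟩

lemma exists_angles_of_mem_line (h2 : AxH2 line) (hθ : θ ∈ Ioo 0 (2 * π))
    (he : e.1 = s(x, chart x θ)) (ha : a ∈ line e) :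
    ∃ s ∈ Ioo 0 θ, ∃ t ∈ Ioo θ (2 * π), a.1 = s(chart x s, chart x t) := by
  obtain ⟨p, q, hap⟩ := exists_eq_mk a
  rw [hap]
  exact exists_angles_of_separatesPts hθ (separatesPts_of_mem_line h2 ha hap he)

/-- For `e = {x, chart x θ}` and `s ∈ (0, θ)`: the angle in `(θ, 2π)` of the other point of
the event of `h_e` through `chart x s`. The values `2π` at `0` and `θ` at `θ` make it
continuous on `[0, θ]`. -/
def partnerAngle (line : Event → Set Event) (e : Event) (x : Circle) (θ s : ℝ) : ℝ :=
  if s ≤ 0 then 2 * π else if θ ≤ s then θ else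
    Classical.epsilon fun t => t ∈ Ioo θ (2 * π) ∧ ∃ a ∈ line e, a.1 = s(chart x s, chart x t)

lemma partnerAngle_zero : partnerAngle line e x θ 0 = 2 * π := by
  simp [partnerAngle]

lemma partnerAngle_self (hθ : 0 < θ) : partnerAngle line e x θ θ = θ := by
  simp [partnerAngle, hθ.not_ge]

lemma partnerAngle_spec (h2 : AxH2 line) (h4 : AxH4 line) (hθ : θ ∈ Ioo 0 (2 * π))
    (he : e.1 = s(x, chart x θ)) (hs : s ∈ Ioo 0 θ) :
    partnerAngle line e x θ s ∈ Ioo θ (2 * π) ∧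
      ∃ a ∈ line e, a.1 = s(chart x s, chart x (partnerAngle line e x θ s)) := by
  rw [partnerAngle, if_neg hs.1.not_ge, if_neg hs.2.not_ge]
  refine Classical.epsilon_spec
    (p := fun t => t ∈ Ioo θ (2 * π) ∧ ∃ a ∈ line e, a.1 = s(chart x s, chart x t)) ?_
  have hs' : s ∈ Ioo 0 (2 * π) := ⟨hs.1, hs.2.trans hθ.2⟩
  obtain ⟨a, ⟨ha, hsa⟩, -⟩ := h4 e (chart x s) (chart_notMem_eventPts hθ he hs' hs.2.ne)
  obtain ⟨s', hs'', t, ht, hat⟩ := exists_angles_of_mem_line h2 hθ he ha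
  rw [hat, chart_mem_mk_chart_iff hs' ⟨hs''.1, hs''.2.trans hθ.2⟩
    ⟨hθ.1.trans ht.1, ht.2⟩] at hsa
  rcases hsa with rfl | rfl
  exacts [⟨t, ht, a, ha, hat⟩, absurd (hs.2.trans ht.1) (lt_irrefl _)]

lemma partnerAngle_eq_of_mem (h2 : AxH2 line) (h4 : AxH4 line) (hθ : θ ∈ Ioo 0 (2 * π))
    (he : e.1 = s(x, chart x θ)) (hs : s ∈ Ioo 0 θ) (ht : t ∈ Ioo θ (2 * π))
    (ha : a ∈ line e) (hat : a.1 = s(chart x s, chart x t)) :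
    partnerAngle line e x θ s = t := by
  obtain ⟨hg, b, hb, hbg⟩ := partnerAngle_spec h2 h4 hθ he hs
  have hab : a = b := eq_of_mem_line_of_mem h2 h4 ha hb (w := chart x s)
    (by simp [hat]) (by simp [hbg])
  rw [hab, hbg] at hat
  exact (mk_chart_inj hs hs hg ht hat).2

lemma exists_eq_partnerAngle_of_mem_line (h2 : AxH2 line) (h4 : AxH4 line)
    (hθ : θ ∈ Ioo 0 (2 * π)) (he : e.1 = s(x, chart x θ)) (ha : a ∈ line e) :
    ∃ s ∈ Ioo 0 θ, a.1 = s(chart x s, chart x (partnerAngle line e x θ s)) := by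
  obtain ⟨s, hs, t, ht, hat⟩ := exists_angles_of_mem_line h2 hθ he ha
  exact ⟨s, hs, by rw [partnerAngle_eq_of_mem h2 h4 hθ he hs ht ha hat, hat]⟩

lemma partnerAngle_lt_partnerAngle (h2 : AxH2 line) (h3 : AxH3 line) (h4 : AxH4 line)
    (hθ : θ ∈ Ioo 0 (2 * π)) (he : e.1 = s(x, chart x θ)) {s s' : ℝ} (hs : s ∈ Ioo 0 θ)
    (hs' : s' ∈ Ioo 0 θ) (hss' : s < s') :
    partnerAngle line e x θ s' < partnerAngle line e x θ s := by
  obtain ⟨hg, a, ha, hag⟩ := partnerAngle_spec h2 h4 hθ he hs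
  obtain ⟨hg', a', ha', hag'⟩ := partnerAngle_spec h2 h4 hθ he hs'
  -- A larger partner angle at `s'` would make `a` and `a'` separate each other, against (h3);
  -- an equal one would give them a common point.
  refine lt_of_le_of_ne (not_lt.1 fun hlt => h3 e a a' ha ha' ?_) fun heq => hss'.ne ?_
  · exact ⟨_, _, _, _, hag, hag', separatesPts_chart_of_lt hss' (hs'.2.trans hg.1) hlt
      (by linarith [hg'.2, hs.1])⟩
  · have haa' : a' = a := eq_of_mem_line_of_mem h2 h4 ha' ha
      (w := chart x (partnerAngle line e x θ s)) (by simp [hag', heq]) (by simp [hag])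
    rw [haa', hag] at hag'
    exact (mk_chart_inj hs hs' hg hg' hag').1

lemma mapsTo_partnerAngle (h2 : AxH2 line) (h4 : AxH4 line) (hθ : θ ∈ Ioo 0 (2 * π))
    (he : e.1 = s(x, chart x θ)) :
    MapsTo (partnerAngle line e x θ) (Icc 0 θ) (Icc θ (2 * π)) := by
  intro s hs
  rcases hs.1.eq_or_lt with rfl | hs0
  · rw [partnerAngle_zero]; exact ⟨hθ.2.le, le_rfl⟩
  rcases hs.2.eq_or_lt with rfl | hsθ
  · rw [partnerAngle_self hθ.1]; exact ⟨le_rfl, hθ.2.le⟩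
  exact Ioo_subset_Icc_self (partnerAngle_spec h2 h4 hθ he ⟨hs0, hsθ⟩).1

lemma strictAntiOn_partnerAngle (h2 : AxH2 line) (h3 : AxH3 line) (h4 : AxH4 line)
    (hθ : θ ∈ Ioo 0 (2 * π)) (he : e.1 = s(x, chart x θ)) :
    StrictAntiOn (partnerAngle line e x θ) (Icc 0 θ) := by
  intro s hs s' hs' hss'
  have hg {r : ℝ} (hr : r ∈ Ioo 0 θ) := (partnerAngle_spec h2 h4 hθ he hr).1
  rcases hs.1.eq_or_lt with rfl | hs0
  · rcases hs'.2.eq_or_lt with rfl | hs'θ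
    · rw [partnerAngle_zero, partnerAngle_self hθ.1]; exact hθ.2
    · rw [partnerAngle_zero]; exact (hg ⟨hss', hs'θ⟩).2
  rcases hs'.2.eq_or_lt with rfl | hs'θ
  · rw [partnerAngle_self hθ.1]; exact (hg ⟨hs0, hss'⟩).1
  exact partnerAngle_lt_partnerAngle h2 h3 h4 hθ he ⟨hs0, hss'.trans hs'θ⟩
    ⟨hs0.trans hss', hs'θ⟩ hss'

lemma surjOn_partnerAngle (h2 : AxH2 line) (h4 : AxH4 line) (hθ : θ ∈ Ioo 0 (2 * π))
    (he : e.1 = s(x, chart x θ)) :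
    SurjOn (partnerAngle line e x θ) (Icc 0 θ) (Icc θ (2 * π)) := by
  intro t ht
  rcases ht.1.eq_or_lt with hθt | hθt
  · exact ⟨θ, ⟨hθ.1.le, le_rfl⟩, hθt ▸ partnerAngle_self hθ.1⟩
  rcases ht.2.eq_or_lt with rfl | ht2π
  · exact ⟨0, ⟨le_rfl, hθ.1.le⟩, partnerAngle_zero⟩
  have ht' : t ∈ Ioo 0 (2 * π) := ⟨hθ.1.trans hθt, ht2π⟩
  obtain ⟨a, ⟨ha, hta⟩, -⟩ := h4 e (chart x t) (chart_notMem_eventPts hθ he ht' hθt.ne')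
  obtain ⟨s, hs, t', ht'', hat⟩ := exists_angles_of_mem_line h2 hθ he ha
  rw [hat, chart_mem_mk_chart_iff ht' ⟨hs.1, hs.2.trans hθ.2⟩
    ⟨hθ.1.trans ht''.1, ht''.2⟩] at hta
  rcases hta with rfl | rfl
  · exact absurd (hs.2.trans hθt) (lt_irrefl _)
  · exact ⟨s, Ioo_subset_Icc_self hs, partnerAngle_eq_of_mem h2 h4 hθ he hs ht'' ha hat⟩

lemma continuousOn_partnerAngle (h2 : AxH2 line) (h3 : AxH3 line) (h4 : AxH4 line)
    (hθ : θ ∈ Ioo 0 (2 * π)) (he : e.1 = s(x, chart x θ)) :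
    ContinuousOn (partnerAngle line e x θ) (Icc 0 θ) :=
  continuousOn_Icc_of_strictAntiOn (strictAntiOn_partnerAngle h2 h3 h4 hθ he)
    (mapsTo_partnerAngle h2 h4 hθ he) (surjOn_partnerAngle h2 h4 hθ he)

lemma continuousOn_chart_partnerAngle (h2 : AxH2 line) (h3 : AxH3 line) (h4 : AxH4 line)
    (hθ : θ ∈ Ioo 0 (2 * π)) (he : e.1 = s(x, chart x θ)) :
    ContinuousOn (fun s => (chart x s, chart x (partnerAngle line e x θ s))) (Icc 0 θ) :=
  (continuous_chart x).continuousOn.prodMk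
    ((continuous_chart x).comp_continuousOn (continuousOn_partnerAngle h2 h3 h4 hθ he))

def lineCurve (line : Event → Set Event) (e : Event) (x : Circle) (θ s : ℝ) :
    Sym2 Circle :=
  Quot.mk _ (chart x s, chart x (partnerAngle line e x θ s))

lemma continuousOn_lineCurve (h2 : AxH2 line) (h3 : AxH3 line) (h4 : AxH4 line)
    (hθ : θ ∈ Ioo 0 (2 * π)) (he : e.1 = s(x, chart x θ)) :
    ContinuousOn (lineCurve line e x θ) (Icc 0 θ) :=
  continuous_quot_mk.comp_continuousOn (continuousOn_chart_partnerAngle h2 h3 h4 hθ he)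

lemma lineCurve_image_Ioo (h2 : AxH2 line) (h4 : AxH4 line) (hθ : θ ∈ Ioo 0 (2 * π))
    (he : e.1 = s(x, chart x θ)) :
    lineCurve line e x θ '' Ioo 0 θ = Subtype.val '' line e := by
  ext z
  constructor
  · rintro ⟨s, hs, rfl⟩
    obtain ⟨-, a, ha, has⟩ := partnerAngle_spec h2 h4 hθ he hs
    exact ⟨a, ha, has⟩
  · rintro ⟨a, ha, rfl⟩
    obtain ⟨s, hs, has⟩ := exists_eq_partnerAngle_of_mem_line h2 h4 hθ he ha
    exact ⟨s, hs, has.symm⟩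

lemma lineCurve_image_Icc (h2 : AxH2 line) (h4 : AxH4 line) (hθ : θ ∈ Ioo 0 (2 * π))
    (he : e.1 = s(x, chart x θ)) :
    lineCurve line e x θ '' Icc 0 θ =
      Subtype.val '' line e ∪ {Sym2.diag x, Sym2.diag (chart x θ)} := by
  have h0 : lineCurve line e x θ 0 = Sym2.diag x := by
    simp [lineCurve, partnerAngle_zero, Sym2.diag]
  have hθ' : lineCurve line e x θ θ = Sym2.diag (chart x θ) := by
    simp [lineCurve, partnerAngle_self hθ.1, Sym2.diag]
  rw [← Ico_insert_right hθ.1.le, ← Ioo_insert_left hθ.1, image_insert_eq, image_insert_eq,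
    lineCurve_image_Ioo h2 h4 hθ he, h0, hθ']
  ext z
  simp only [mem_insert_iff, mem_union, mem_singleton_iff]
  tauto

lemma closure_image_val_line_of_chart (h2 : AxH2 line) (h3 : AxH3 line) (h4 : AxH4 line)
    (hθ : θ ∈ Ioo 0 (2 * π)) (he : e.1 = s(x, chart x θ)) :
    closure (Subtype.val '' line e : Set (Sym2 Circle)) =
      Subtype.val '' line e ∪ {Sym2.diag x, Sym2.diag (chart x θ)} := by
  rw [← lineCurve_image_Icc h2 h4 hθ he]
  refine (closure_minimal ?_ ?_).antisymm ?_
  · rw [lineCurve_image_Icc h2 h4 hθ he]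
    exact subset_union_left
  · unfold lineCurve
    rw [← image_image (Quot.mk _)]
    exact isClosed_quot_mk_sym2_image
      (isCompact_Icc.image_of_continuousOn (continuousOn_chart_partnerAngle h2 h3 h4 hθ he))
  · rw [← lineCurve_image_Ioo h2 h4 hθ he, ← closure_Ioo hθ.1.ne]
    exact ContinuousOn.image_closure
      (by rw [closure_Ioo hθ.1.ne]; exact continuousOn_lineCurve h2 h3 h4 hθ he)

lemma nonempty_line_homeomorph_Ioo (h2 : AxH2 line) (h3 : AxH3 line) (h4 : AxH4 line)
    (hθ : θ ∈ Ioo 0 (2 * π)) (he : e.1 = s(x, chart x θ)) :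
    Nonempty (Ioo 0 θ ≃ₜ line e) := by
  have hspec (u : Ioo 0 θ) := partnerAngle_spec h2 h4 hθ he u.2
  choose hg Φ hΦ hΦval using hspec
  let Φ' : Ioo 0 θ → line e := fun u => ⟨Φ u, hΦ u⟩
  have hinj : Function.Injective Φ' := fun u v huv => by
    have := congrArg (fun a : line e => a.1.1) huv
    simp only [Φ', hΦval] at this
    exact Subtype.ext (mk_chart_inj u.2 v.2 (hg u) (hg v) this).1
  have hsurj : Function.Surjective Φ' := fun a => by
    obtain ⟨s, hs, has⟩ := exists_eq_partnerAngle_of_mem_line h2 h4 hθ he a.2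
    exact ⟨⟨s, hs⟩, Subtype.ext (Subtype.ext ((hΦval _).trans has.symm))⟩
  have hcont : Continuous Φ' := by
    refine continuous_induced_rng.2 (continuous_induced_rng.2 ?_)
    have : (fun u => (Φ' u).1.1) = fun u : Ioo 0 θ => lineCurve line e x θ u := funext hΦval
    change Continuous fun u => (Φ' u).1.1
    rw [this]
    exact ((continuousOn_lineCurve h2 h3 h4 hθ he).mono Ioo_subset_Icc_self).domRestrict
  have hopen : IsOpenMap Φ' := by
    rintro _ ⟨O, hO, rfl⟩
    let W : Set (Sym2 Circle) :=
      Quot.mk _ '' ((chart x '' (O ∩ Ioo 0 θ)) ×ˢ (chart x '' Ioo θ (2 * π)))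
    have hW : IsOpen W := isOpenMap_quot_mk_sym2 _
      ((isOpenMap_chart x _ (hO.inter isOpen_Ioo)).prod (isOpenMap_chart x _ isOpen_Ioo))
    suffices Φ' '' (Subtype.val ⁻¹' O) = (fun a : line e => a.1.1) ⁻¹' W from
      this ▸ hW.preimage (continuous_subtype_val.comp continuous_subtype_val)
    ext a
    constructor
    · rintro ⟨u, hu, rfl⟩
      exact ⟨_, ⟨⟨u, ⟨hu, u.2⟩, rfl⟩, ⟨_, hg u, rfl⟩⟩, (hΦval u).symm⟩
    · rintro ⟨⟨_, _⟩, ⟨⟨r, hr, rfl⟩, ⟨t, ht, rfl⟩⟩, har⟩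
      have hgr := partnerAngle_eq_of_mem h2 h4 hθ he hr.2 ht a.2 har.symm
      refine ⟨⟨r, hr.2⟩, hr.1, Subtype.ext (Subtype.ext ?_)⟩
      rw [hΦval, hgr]
      exact har
  exact ⟨(Equiv.ofBijective Φ' ⟨hinj, hsurj⟩).toHomeomorphOfContinuousOpen hcont hopen⟩

lemma exists_mem_line_mem_line_of_chart (h2 : AxH2 line) (h3 : AxH3 line) (h4 : AxH4 line)
    (h5 : AxH5 line) {s₀ t₀ : ℝ} (hθ : θ ∈ Ioo 0 (2 * π)) (ha : a.1 = s(x, chart x θ))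
    (hb : b.1 = s(chart x s₀, chart x t₀)) (hs₀ : 0 < s₀) (hst : s₀ < t₀) (ht₀ : t₀ < θ) :
    ∃ d, a ∈ line d ∧ b ∈ line d := by
  set y := chart x s₀
  have hθ' : t₀ - s₀ ∈ Ioo 0 (2 * π) := ⟨by linarith, by linarith [hθ.2]⟩
  have hrebase (r : ℝ) : chart y (r - s₀) = chart x r := by rw [chart_chart, add_sub_cancel]
  have hb' : b.1 = s(y, chart y (t₀ - s₀)) := by rw [hb, hrebase]
  let ga := partnerAngle line a x θ
  let gb := partnerAngle line b y (t₀ - s₀)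
  let F : ℝ → ℝ := fun r => s₀ + gb (r - s₀) - ga r
  have hF : ContinuousOn F (Icc s₀ t₀) := by
    refine (continuousOn_const.add ((continuousOn_partnerAngle h2 h3 h4 hθ' hb').comp
      (continuous_sub_right s₀).continuousOn ?_)).sub
      ((continuousOn_partnerAngle h2 h3 h4 hθ ha).mono (Icc_subset_Icc hs₀.le ht₀.le))
    exact fun r hr => ⟨sub_nonneg.2 hr.1, sub_le_sub_right hr.2 s₀⟩
  have hga {r : ℝ} (hr : r ∈ Icc s₀ t₀) :=
    (partnerAngle_spec h2 h4 hθ ha ⟨hs₀.trans_le hr.1, hr.2.trans_lt ht₀⟩).1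
  have hFs₀ : 0 < F s₀ := by
    simp only [F, gb, sub_self, partnerAngle_zero]
    linarith [(hga ⟨le_rfl, hst.le⟩).2]
  have hFt₀ : F t₀ < 0 := by
    simp only [F, gb, partnerAngle_self hθ'.1]
    linarith [(hga ⟨hst.le, le_rfl⟩).1]
  obtain ⟨r, hr, hFr⟩ := intermediate_value_Icc' hst.le hF ⟨hFt₀.le, hFs₀.le⟩
  have hr' : r ∈ Ioo s₀ t₀ :=
    ⟨hr.1.lt_of_ne (by rintro rfl; linarith), hr.2.lt_of_ne (by rintro rfl; linarith)⟩
  obtain ⟨-, d, hda, hd⟩ := partnerAngle_spec h2 h4 hθ ha ⟨hs₀.trans hr'.1, hr'.2.trans ht₀⟩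
  obtain ⟨-, d', hdb, hd'⟩ :=
    partnerAngle_spec h2 h4 hθ' hb' ⟨sub_pos.2 hr'.1, sub_lt_sub_right hr'.2 s₀⟩
  have hdd' : d = d' := by
    refine Subtype.ext (hd.trans (hd'.trans ?_).symm)
    rw [hrebase, ← hrebase (partnerAngle _ _ _ _ r)]
    congr 3
    simp only [F] at hFr
    linarith
  exact ⟨d, h5 a d hda, hdd' ▸ h5 b d' hdb⟩

lemma exists_mem_line_mem_line_of_strongCausal (h2 : AxH2 line) (h3 : AxH3 line)
    (h4 : AxH4 line) (h5 : AxH5 line) (h : StrongCausal a b) :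
    ∃ d, a ∈ line d ∧ b ∈ line d := by
  obtain ⟨x, θ, s, t, hθ, hs, hst, htθ, ha, hb⟩ := exists_chart_of_strongCausal h
  exact exists_mem_line_mem_line_of_chart h2 h3 h4 h5 hθ ha hb hs hst htθ

lemma nonempty_line_homeomorph_real (h2 : AxH2 line) (h3 : AxH3 line) (h4 : AxH4 line)
    (e : Event) : Nonempty (line e ≃ₜ ℝ) := by
  obtain ⟨x, y, hxy⟩ := exists_eq_mk e
  obtain ⟨θ, hθ, rfl⟩ := exists_chart_eq (ne_of_eq_mk hxy).symm
  obtain ⟨Φ⟩ := nonempty_line_homeomorph_Ioo h2 h3 h4 hθ hxy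
  obtain ⟨Ψ⟩ := nonempty_Ioo_homeomorph_real hθ.1
  exact ⟨Φ.symm.trans Ψ⟩

lemma closure_image_val_line (h2 : AxH2 line) (h3 : AxH3 line) (h4 : AxH4 line)
    (he : e.1 = s(x, y)) :
    closure (Subtype.val '' line e : Set (Sym2 Circle)) =
      Subtype.val '' line e ∪ {Sym2.diag x, Sym2.diag y} := by
  obtain ⟨θ, hθ, rfl⟩ := exists_chart_eq (ne_of_eq_mk he).symm
  exact closure_image_val_line_of_chart h2 h3 h4 hθ he

lemma exists_mem_line_mem_line_iff (h2 : AxH2 line) (h3 : AxH3 line) (h4 : AxH4 line)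
    (h5 : AxH5 line) (hab : a ≠ b) :
    (∃ e, a ∈ line e ∧ b ∈ line e) ↔ StrongCausal a b :=
  ⟨fun ⟨_, ha, hb⟩ => strongCausal_of_mem_line h2 h3 h4 hab ha hb,
    exists_mem_line_mem_line_of_strongCausal h2 h3 h4 h5⟩

lemma exists_mem_line_inter_iff (h2 : AxH2 line) (h3 : AxH3 line) (h4 : AxH4 line)
    (h5 : AxH5 line) (hee' : e ≠ e') :
    (∃ a, a ∈ line e ∧ a ∈ line e') ↔ StrongCausal e e' := by
  rw [← exists_mem_line_mem_line_iff h2 h3 h4 h5 hee']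
  exact ⟨fun ⟨a, ha, ha'⟩ => ⟨a, h5 e a ha, h5 e' a ha'⟩,
    fun ⟨a, ha, ha'⟩ => ⟨a, h5 a e ha, h5 a e' ha'⟩⟩

lemma exists_mem_line_mem_iff (h2 : AxH2 line) (h4 : AxH4 line) :
    (∃ a, a ∈ line e ∧ x ∈ a.1) ↔ x ∉ EventPts e :=
  ⟨fun ⟨_, ha, hx⟩ => notMem_eventPts_of_mem_line h2 ha hx, fun hx => (h4 e x hx).exists⟩

end Lines

theorem stmt7_general (line : Event → Set Event)
    (h2 : AxH2 line) (h3 : AxH3 line)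
    (h4 : AxH4 line) (h5 : AxH5 line) (h6 : AxH6 line) :
    (∀ e : Event, Nonempty (↥(line e) ≃ₜ ℝ) ∧
      ∀ x y : Circle, e.1 = s(x, y) →
        closure (Subtype.val '' line e : Set (Sym2 Circle))
          = (Subtype.val '' line e) ∪ {Sym2.diag x, Sym2.diag y}) ∧
    (∀ a b : Event, a ≠ b →
      ((∃ e, a ∈ line e ∧ b ∈ line e) ↔ StrongCausal a b) ∧
      ∀ e e', a ∈ line e → b ∈ line e → a ∈ line e' → b ∈ line e' → e = e') ∧
    (∀ e e' : Event, e ≠ e' →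
      ((∃ a, a ∈ line e ∧ a ∈ line e') ↔ StrongCausal e e') ∧
      ∀ a a', a ∈ line e → a ∈ line e' → a' ∈ line e → a' ∈ line e' → a = a') ∧
    (∀ x : Circle, ∀ e : Event,
      ((∃ a, a ∈ line e ∧ x ∈ a.1) ↔ x ∉ EventPts e) ∧
      ∀ a a', a ∈ line e → x ∈ a.1 → a' ∈ line e → x ∈ a'.1 → a = a') := by
  refine ⟨fun e => ⟨nonempty_line_homeomorph_real h2 h3 h4 e,
      fun _ _ => closure_image_val_line h2 h3 h4⟩,
    fun a b hab => ⟨exists_mem_line_mem_line_iff h2 h3 h4 h5 hab, h6 a b hab⟩,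
    fun e e' hee' => ⟨exists_mem_line_inter_iff h2 h3 h4 h5 hee', ?_⟩,
    fun x e => ⟨exists_mem_line_mem_iff h2 h4, fun a a' ha hx ha' hx' =>
      eq_of_mem_line_of_mem h2 h4 ha ha' hx hx'⟩⟩
  intro a a' hae hae' ha'e ha'e'
  by_contra hne
  exact hee' (h6 a a' hne e e' hae ha'e hae' ha'e')

/-- properties of timelike lines in a causal space: (a) every timelike
line is homeomorphic to `ℝ` and the boundary of its closure in `aY ∪ ∂∞aY = Sym². S¹`
is the dual event; (b) two distinct events lie on a (unique) common timelike line iff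
they are in the strong causal relation; (c) two distinct timelike lines meet (in a
unique event) iff their dual events are in the strong causal relation; (d) a light
line `p_x` meets `h_e` (in a unique event) iff `x ∉ e`. -/
theorem stmt7 (line : Event → Set Event)
    (h1 : AxH1 (Set.range line) line) (h2 : AxH2 line) (h3 : AxH3 line)
    (h4 : AxH4 line) (h5 : AxH5 line) (h6 : AxH6 line) :
    (∀ e : Event, Nonempty (↥(line e) ≃ₜ ℝ) ∧
      ∀ x y : Circle, e.1 = s(x, y) →
        closure (Subtype.val '' line e : Set (Sym2 Circle))
          = (Subtype.val '' line e) ∪ {Sym2.diag x, Sym2.diag y}) ∧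
    (∀ a b : Event, a ≠ b →
      ((∃ e, a ∈ line e ∧ b ∈ line e) ↔ StrongCausal a b) ∧
      ∀ e e', a ∈ line e → b ∈ line e → a ∈ line e' → b ∈ line e' → e = e') ∧
    (∀ e e' : Event, e ≠ e' →
      ((∃ a, a ∈ line e ∧ a ∈ line e') ↔ StrongCausal e e') ∧
      ∀ a a', a ∈ line e → a ∈ line e' → a' ∈ line e → a' ∈ line e' → a = a') ∧
    (∀ x : Circle, ∀ e : Event,
      ((∃ a, a ∈ line e ∧ x ∈ a.1) ↔ x ∉ EventPts e) ∧
      ∀ a a', a ∈ line e → x ∈ a.1 → a' ∈ line e → x ∈ a'.1 → a = a') :=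
  stmt7_general line h2 h3 h4 h5 h6
end Paper
end
end
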